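/- Let M, a, s be positive integers with M > 1 such that ∑_{i=0}^{M-1} (a+i)^2 = s^2. If M = 12·m₁ + 11 for a nonnegative integer m₁, then for every integer i ≥ 1 one has m₁ ≢ 3^(2i-1) − 1 (mod 3^(2i)) and m₁ ≢ 2·3^(2i-1) − 1 (mod 3^(2i)). -/

import Mathlib

/-!
Summing the squares gives `s² = M · ((a + 6m₁ + 5)² + 2(6m₁ + 5)(m₁ + 1))`, and the excluded
classes say exactly that `m₁ + 1 = 3^k e` with `k` odd and `3 ∤ e`. Since `M ≡ 6m₁ + 5 ≡ 2 (mod 3)`,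
the second summand has odd `3`-adic valuation `k`, while the first has even valuation `2v`. If
`k < 2v` then `v₃(s²) = k` is odd; if `2v < k` then the `3`-free part of `s²` is `≡ 2 (mod 3)`.
Both are impossible for a square.
-/

theorem Nat.even_and_isSquare_of_sq_eq_prime_pow_mul {p s t B : ℕ} (hp : p.Prime)
    (hB : ¬ p ∣ B) (h : s ^ 2 = p ^ t * B) : Even t ∧ IsSquare B := by
  have hB0 : B ≠ 0 := by rintro rfl; exact hB (dvd_zero p)
  constructor
  · have := congrArg (fun n => n.factorization p) h
    simp only [Nat.factorization_pow, Nat.factorization_mul (pow_ne_zero t hp.ne_zero) hB0] at this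
    simp only [Finsupp.add_apply, Finsupp.smul_apply, smul_eq_mul, hp.factorization_self,
      Nat.factorization_eq_zero_of_not_dvd hB, mul_one, add_zero] at this
    exact ⟨s.factorization p, by omega⟩
  · refine ⟨ordCompl[p] s, ?_⟩
    rw [← Nat.ordCompl_pow_mul_of_not_dvd t hp hB, ← h, sq, Nat.ordCompl_mul]

theorem Nat.mod_three_eq_one_of_isSquare {n : ℕ} (hn : IsSquare n) (h : ¬ 3 ∣ n) : n % 3 = 1 := by
  obtain ⟨r, rfl⟩ := hn
  rw [Nat.dvd_iff_mod_eq_zero, Nat.mul_mod] at h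
  rw [Nat.mul_mod]
  have := Nat.mod_lt r three_pos
  interval_cases r % 3 <;> simp_all

theorem Nat.exists_eq_pow_mul_of_modEq_mul_pow_sub_one {p m u k : ℕ} (hp : p ≠ 0) (hu : ¬ p ∣ u)
    (h : m ≡ u * p ^ k - 1 [MOD p ^ (k + 1)]) : ∃ e, m + 1 = p ^ k * e ∧ ¬ p ∣ e := by
  have hu0 : u ≠ 0 := by rintro rfl; exact hu (dvd_zero p)
  have h1 : m + 1 ≡ p ^ k * u [MOD p ^ k * p] := by
    have := h.add_right 1
    rwa [Nat.sub_add_cancel (Nat.one_le_iff_ne_zero.mpr (mul_ne_zero hu0 (pow_ne_zero k hp))),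
      mul_comm u, pow_succ] at this
  obtain ⟨e, he⟩ := (h1.dvd_iff (dvd_mul_right _ _)).mpr (dvd_mul_right _ _)
  refine ⟨e, he, fun hpe => hu ?_⟩
  have heu : e ≡ u [MOD p] := Nat.ModEq.mul_left_cancel' (pow_ne_zero k hp) (he ▸ h1)
  exact (heu.dvd_iff dvd_rfl).mp hpe

theorem Nat.sq_ne_mul_sq_add_three_pow_mul {M c d k s : ℕ} (hM : M % 3 = 2) (hc : c ≠ 0)
    (hd : ¬ 3 ∣ d) (hk : Odd k) : s ^ 2 ≠ M * (c ^ 2 + 3 ^ k * d) := by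
  intro h
  obtain ⟨v, c', hc', rfl⟩ := Nat.exists_eq_pow_mul_and_not_dvd hc 3 (by norm_num)
  have hc'sq : c' ^ 2 % 3 = 1 :=
    Nat.mod_three_eq_one_of_isSquare ⟨c', sq c'⟩ (fun h3 => hc' (Nat.prime_three.dvd_of_dvd_pow h3))
  rcases lt_trichotomy (2 * v) k with hlt | heq | hgt
  · obtain ⟨w, rfl⟩ := Nat.exists_eq_add_of_lt hlt
    have hB : (M * (c' ^ 2 + 3 ^ (w + 1) * d)) % 3 = 2 := by
      rw [_root_.pow_succ' 3 w, mul_assoc, Nat.mul_mod, Nat.add_mul_mod_self_left, hM, hc'sq]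
    have hs : s ^ 2 = 3 ^ (2 * v) * (M * (c' ^ 2 + 3 ^ (w + 1) * d)) := by rw [h]; ring
    have := Nat.mod_three_eq_one_of_isSquare
      (Nat.even_and_isSquare_of_sq_eq_prime_pow_mul Nat.prime_three (by omega) hs).2 (by omega)
    omega
  · exact Nat.not_even_iff_odd.mpr hk ⟨v, by omega⟩
  · obtain ⟨w, hw⟩ := Nat.exists_eq_add_of_lt hgt
    have hs : s ^ 2 = 3 ^ k * (M * (3 ^ (w + 1) * c' ^ 2 + d)) := by
      rw [h, mul_pow, ← pow_mul, mul_comm v, hw, pow_add]; ring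
    have hB : ¬ 3 ∣ M * (3 ^ (w + 1) * c' ^ 2 + d) := by
      intro h3
      rcases Nat.prime_three.dvd_mul.mp h3 with h3 | h3
      · omega
      · exact hd ((Nat.dvd_add_right (dvd_mul_of_dvd_left (dvd_pow_self 3 w.succ_ne_zero) _)).mp h3)
    exact Nat.not_even_iff_odd.mpr hk
      (Nat.even_and_isSquare_of_sq_eq_prime_pow_mul Nat.prime_three hB hs).1

theorem twelve_mul_sum_range_add_sq (a M : ℕ) :
    12 * ∑ i ∈ Finset.range M, ((a : ℤ) + i) ^ 2 = M * (3 * (2 * a + M - 1) ^ 2 + M ^ 2 - 1) := by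
  induction M with
  | zero => simp
  | succ m ih =>
    rw [Finset.sum_range_succ, mul_add, ih]
    push_cast
    ring

theorem sq_eq_of_sum_range_sq_eq {a m s : ℕ}
    (h : ∑ i ∈ Finset.range (12 * m + 11), (a + i) ^ 2 = s ^ 2) :
    s ^ 2 = (12 * m + 11) * ((a + 6 * m + 5) ^ 2 + 2 * (6 * m + 5) * (m + 1)) := by
  have hz : ∑ i ∈ Finset.range (12 * m + 11), ((a : ℤ) + i) ^ 2 = s ^ 2 := by exact_mod_cast h
  have := twelve_mul_sum_range_add_sq a (12 * m + 11)
  zify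
  refine mul_left_cancel₀ (by norm_num : (12 : ℤ) ≠ 0) ?_
  push_cast at this
  linear_combination this - 12 * hz

theorem not_modEq_of_sum_range_sq_eq {a s m u k : ℕ}
    (h : ∑ i ∈ Finset.range (12 * m + 11), (a + i) ^ 2 = s ^ 2) (hk : Odd k) (hu : ¬ 3 ∣ u) :
    ¬ m ≡ u * 3 ^ k - 1 [MOD 3 ^ (k + 1)] := by
  intro hm
  obtain ⟨e, he, he3⟩ := Nat.exists_eq_pow_mul_of_modEq_mul_pow_sub_one three_ne_zero hu hm
  refine Nat.sq_ne_mul_sq_add_three_pow_mul (s := s) (M := 12 * m + 11) (c := a + 6 * m + 5)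
    (d := 2 * (6 * m + 5) * e) (by omega) (by omega) ?_ hk ?_
  · rw [Nat.prime_three.dvd_mul, Nat.prime_three.dvd_mul]
    omega
  · rw [sq_eq_of_sum_range_sq_eq h, he]
    ring

theorem stmt_general (M a s m₁ : ℕ)
    (hsum : ∑ i ∈ Finset.range M, (a + i) ^ 2 = s ^ 2)
    (hMeq : M = 12 * m₁ + 11) :
    ∀ i : ℕ, 1 ≤ i →
      ¬ m₁ ≡ 3 ^ (2 * i - 1) - 1 [MOD 3 ^ (2 * i)] ∧ ¬ m₁ ≡ 2 * 3 ^ (2 * i - 1) - 1 [MOD 3 ^ (2 * i)] := by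
  subst hMeq
  intro i hi
  obtain ⟨k, rfl⟩ : ∃ k, i = k + 1 := ⟨i - 1, by omega⟩
  rw [show 2 * (k + 1) - 1 = 2 * k + 1 by omega, show 2 * (k + 1) = 2 * k + 1 + 1 by ring]
  have hk : Odd (2 * k + 1) := odd_two_mul_add_one k
  exact ⟨one_mul (3 ^ (2 * k + 1)) ▸ not_modEq_of_sum_range_sq_eq hsum hk (u := 1) (by norm_num),
    not_modEq_of_sum_range_sq_eq hsum hk (by norm_num)⟩

theorem stmt (M a s m₁ : ℕ) (hM : 1 < M) (ha : 1 ≤ a) (hs : 1 ≤ s)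
    (hsum : ∑ i ∈ Finset.range M, (a + i) ^ 2 = s ^ 2)
    (hMeq : M = 12 * m₁ + 11) :
    ∀ i : ℕ, 1 ≤ i →
      ¬ m₁ ≡ 3 ^ (2 * i - 1) - 1 [MOD 3 ^ (2 * i)] ∧ ¬ m₁ ≡ 2 * 3 ^ (2 * i - 1) - 1 [MOD 3 ^ (2 * i)] :=
  stmt_general M a s m₁ hsum hMeq
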